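/- Let R = F_1 × ... × F_k (k ≥ 2, each F_i a finite field) with some F_i ≇ Z_2. Then the metric dimension of the zero-divisor graph Γ(R) equals |Z(R)| − 2^k + 2. -/
import Mathlib


/-- The set of nonzero zero-divisors of a commutative ring `R`. -/
def zdvSet (R : Type*) [CommRing R] : Set R :=
  {x : R | x ≠ 0 ∧ ∃ y : R, y ≠ 0 ∧ x * y = 0}

/-- The nonzero zero-divisors of `R`, the vertex set of the zero-divisor graph. -/
abbrev ZdvR (R : Type*) [CommRing R] : Type _ := ↥(zdvSet R)

/-- The zero-divisor graph of a commutative ring `R`. -/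
def zdgR (R : Type*) [CommRing R] : SimpleGraph (ZdvR R) :=
  SimpleGraph.fromRel (fun x y => x.1 * y.1 = 0)

/-- A set `S` of vertices is a resolving set: distinct vertices have distinct
distance vectors to `S`. -/
def IsResolving {V : Type*} (G : SimpleGraph V) (S : Set V) : Prop :=
  ∀ u v : V, (∀ w ∈ S, G.dist u w = G.dist v w) → u = v

/-- The metric dimension: the least cardinality of a (finite) resolving set. -/
noncomputable def mdim {V : Type*} (G : SimpleGraph V) : ℕ :=
  sInf {m | ∃ S : Set V, S.Finite ∧ S.ncard = m ∧ IsResolving G S}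

section Aux

variable {k : ℕ} {F : Fin k → Type*} [∀ i, Field (F i)]

open Finset

noncomputable def psupp (x : ∀ i, F i) : Finset (Fin k) :=
  @Finset.filter _ (fun i => x i ≠ 0) (Classical.decPred _) Finset.univ

lemma mem_psupp {x : ∀ i, F i} {i : Fin k} : i ∈ psupp x ↔ x i ≠ 0 := by
  classical
  unfold psupp
  simp only [Finset.mem_filter, Finset.mem_univ, true_and]

lemma mul_eq_zero_iff_inter (x y : ∀ i, F i) :
    x * y = 0 ↔ psupp x ∩ psupp y = ∅ := by
  constructor
  · intro h
    rw [Finset.eq_empty_iff_forall_notMem]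
    intro i hi
    rw [Finset.mem_inter, mem_psupp, mem_psupp] at hi
    have h' := congrFun h i
    rw [Pi.mul_apply, Pi.zero_apply] at h'
    rcases mul_eq_zero.mp h' with h'' | h'' <;> tauto
  · intro h
    funext i
    rw [Pi.mul_apply, Pi.zero_apply]
    have h' : ¬(i ∈ psupp x ∧ i ∈ psupp y) := by
      rw [← Finset.mem_inter, h]
      simp
    rw [mem_psupp, mem_psupp] at h'
    push_neg at h'
    by_cases hx : x i = 0
    · rw [hx, zero_mul]
    · rw [h' hx, mul_zero]

lemma mem_zdvSet_iff (x : ∀ i, F i) :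
    x ∈ zdvSet (∀ i, F i) ↔ x ≠ 0 ∧ ∃ i, x i = 0 := by
  classical
  constructor
  · rintro ⟨hx, y, hy, hxy⟩
    refine ⟨hx, ?_⟩
    obtain ⟨i, hi⟩ := Function.ne_iff.mp hy
    have h' := congrFun hxy i
    rw [Pi.mul_apply, Pi.zero_apply] at h'
    rcases mul_eq_zero.mp h' with h | h
    · exact ⟨i, h⟩
    · exact absurd h hi
  · rintro ⟨hx, i, hi⟩
    refine ⟨hx, (fun j => if x j = 0 then 1 else 0), ?_, ?_⟩
    · intro h
      have h' := congrFun h i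
      simp only [hi, if_pos, Pi.zero_apply] at h'
      exact one_ne_zero h'
    · funext j
      by_cases h : x j = 0 <;> simp [Pi.mul_apply, h]

lemma psupp_ne_empty (u : ZdvR (∀ i, F i)) : psupp u.1 ≠ ∅ := by
  obtain ⟨hx, -⟩ := (mem_zdvSet_iff u.1).mp u.2
  obtain ⟨i, hi⟩ := Function.ne_iff.mp hx
  exact Finset.ne_empty_of_mem (mem_psupp.mpr hi)

lemma psupp_ne_univ (u : ZdvR (∀ i, F i)) : psupp u.1 ≠ Finset.univ := by
  obtain ⟨-, i, hi⟩ := (mem_zdvSet_iff u.1).mp u.2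
  intro h
  exact (mem_psupp.mp (h ▸ Finset.mem_univ i)) hi

lemma adj_iff (u v : ZdvR (∀ i, F i)) :
    (zdgR (∀ i, F i)).Adj u v ↔ u ≠ v ∧ psupp u.1 ∩ psupp v.1 = ∅ := by
  show (SimpleGraph.fromRel _).Adj u v ↔ _
  rw [SimpleGraph.fromRel_adj]
  constructor
  · rintro ⟨hne, h | h⟩
    · exact ⟨hne, (mul_eq_zero_iff_inter _ _).mp h⟩
    · refine ⟨hne, ?_⟩
      rw [Finset.inter_comm]
      exact (mul_eq_zero_iff_inter _ _).mp h
  · rintro ⟨hne, h⟩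
    exact ⟨hne, Or.inl ((mul_eq_zero_iff_inter _ _).mpr h)⟩

/-- Characteristic vector of a set of indices. -/
noncomputable def chi (F : Fin k → Type*) [∀ i, Field (F i)] (A : Finset (Fin k)) :
    ∀ i, F i :=
  fun i => if i ∈ A then 1 else 0

lemma psupp_chi (A : Finset (Fin k)) : psupp (chi F A) = A := by
  ext i
  rw [mem_psupp]
  by_cases h : i ∈ A <;> simp [chi, h]

lemma chi_mem {A : Finset (Fin k)} (h1 : A ≠ ∅) (h2 : A ≠ Finset.univ) :
    chi F A ∈ zdvSet (∀ i, F i) := by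
  rw [mem_zdvSet_iff]
  constructor
  · intro h
    obtain ⟨i, hi⟩ := Finset.nonempty_iff_ne_empty.mpr h1
    have h' := congrFun h i
    simp [chi, hi] at h'
  · obtain ⟨i, hi⟩ : ∃ i, i ∉ A := by
      by_contra hc
      push_neg at hc
      exact h2 (Finset.eq_univ_iff_forall.mpr hc)
    exact ⟨i, by simp [chi, hi]⟩

/-- Vertex given by the characteristic vector. -/
noncomputable def vchi (F : Fin k → Type*) [∀ i, Field (F i)] (A : Finset (Fin k))
    (h1 : A ≠ ∅) (h2 : A ≠ Finset.univ) : ZdvR (∀ i, F i) :=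
  ⟨chi F A, chi_mem h1 h2⟩

lemma ne_of_inter_eq_empty {A B : Finset (Fin k)} (hA : A ≠ ∅) (h : A ∩ B = ∅) : A ≠ B := by
  intro e
  subst e
  rw [Finset.inter_self] at h
  exact hA h

lemma vertex_ne_of_psupp_ne {u v : ZdvR (∀ i, F i)} (h : psupp u.1 ≠ psupp v.1) : u ≠ v :=
  fun e => h (by rw [e])

lemma dist_formula (u v : ZdvR (∀ i, F i)) (huv : u ≠ v) :
    (zdgR (∀ i, F i)).dist u v =
      if psupp u.1 ∩ psupp v.1 = ∅ then 1
      else if psupp u.1 ∪ psupp v.1 = Finset.univ then 3 else 2 := by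
  have hAne : psupp u.1 ≠ ∅ := psupp_ne_empty u
  have hAuniv : psupp u.1 ≠ Finset.univ := psupp_ne_univ u
  have hBne : psupp v.1 ≠ ∅ := psupp_ne_empty v
  have hBuniv : psupp v.1 ≠ Finset.univ := psupp_ne_univ v
  split_ifs with h1 h2
  · exact SimpleGraph.dist_eq_one_iff_adj.mpr ((adj_iff u v).mpr ⟨huv, h1⟩)
  · -- distance 3
    have hABne : psupp u.1 ≠ psupp v.1 := by
      intro e
      rw [e, Finset.union_self] at h2
      exact hBuniv h2
    have hcAne : (psupp u.1)ᶜ ≠ ∅ := fun h => hAuniv ((Finset.compl_eq_empty_iff _).mp h)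
    have hcAuniv : (psupp u.1)ᶜ ≠ Finset.univ :=
      fun h => hAne ((Finset.compl_eq_univ_iff _).mp h)
    have hcBne : (psupp v.1)ᶜ ≠ ∅ := fun h => hBuniv ((Finset.compl_eq_empty_iff _).mp h)
    have hcBuniv : (psupp v.1)ᶜ ≠ Finset.univ :=
      fun h => hBne ((Finset.compl_eq_univ_iff _).mp h)
    set w1 : ZdvR (∀ i, F i) := vchi F (psupp u.1)ᶜ hcAne hcAuniv with hw1
    set w2 : ZdvR (∀ i, F i) := vchi F (psupp v.1)ᶜ hcBne hcBuniv with hw2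
    have hw1s : psupp w1.1 = (psupp u.1)ᶜ := psupp_chi _
    have hw2s : psupp w2.1 = (psupp v.1)ᶜ := psupp_chi _
    have ha1 : (zdgR (∀ i, F i)).Adj u w1 := by
      rw [adj_iff]
      refine ⟨vertex_ne_of_psupp_ne ?_, ?_⟩
      · rw [hw1s]
        exact ne_of_inter_eq_empty hAne (Finset.inter_compl _)
      · rw [hw1s]
        exact Finset.inter_compl _
    have ha2 : (zdgR (∀ i, F i)).Adj w1 w2 := by
      rw [adj_iff, hw1s, hw2s]
      constructor
      · apply vertex_ne_of_psupp_ne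
        rw [hw1s, hw2s]
        intro e
        apply hABne
        have := congrArg (·ᶜ) e
        simpa using this
      · rw [← Finset.compl_union, h2, Finset.compl_univ]
    have ha3 : (zdgR (∀ i, F i)).Adj w2 v := by
      rw [adj_iff, hw2s]
      constructor
      · apply vertex_ne_of_psupp_ne
        rw [hw2s]
        exact ne_of_inter_eq_empty hcBne (by rw [Finset.inter_comm]; exact Finset.inter_compl _)
      · rw [Finset.inter_comm]
        exact Finset.inter_compl _
    set p : (zdgR (∀ i, F i)).Walk u v :=
      SimpleGraph.Walk.cons ha1 (SimpleGraph.Walk.cons ha2 (SimpleGraph.Walk.cons ha3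
        SimpleGraph.Walk.nil)) with hp
    have hle : (zdgR (∀ i, F i)).dist u v ≤ 3 := by
      have := SimpleGraph.dist_le p
      simpa [hp] using this
    have hreach : (zdgR (∀ i, F i)).Reachable u v := p.reachable
    have hne0 : (zdgR (∀ i, F i)).dist u v ≠ 0 :=
      fun h => huv (hreach.dist_eq_zero_iff.mp h)
    have hne1 : (zdgR (∀ i, F i)).dist u v ≠ 1 := by
      intro h
      exact h1 ((adj_iff u v).mp (SimpleGraph.dist_eq_one_iff_adj.mp h)).2
    have hne2 : (zdgR (∀ i, F i)).dist u v ≠ 2 := by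
      intro h
      obtain ⟨q, hq⟩ := SimpleGraph.exists_walk_of_dist_ne_zero hne0
      rw [h] at hq
      set x : ZdvR (∀ i, F i) := q.getVert 1 with hx
      have hadj1 : (zdgR (∀ i, F i)).Adj u x := by
        have := q.adj_getVert_succ (i := 0) (by omega)
        simpa [q.getVert_zero] using this
      have hadj2 : (zdgR (∀ i, F i)).Adj x v := by
        have := q.adj_getVert_succ (i := 1) (by omega)
        have h2' : q.getVert 2 = v := by
          have := q.getVert_length
          rwa [hq] at this
        rwa [h2'] at this
      have e1 : psupp u.1 ∩ psupp x.1 = ∅ := ((adj_iff _ _).mp hadj1).2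
      have e2 : psupp x.1 ∩ psupp v.1 = ∅ := ((adj_iff _ _).mp hadj2).2
      obtain ⟨i, hi⟩ := Finset.nonempty_iff_ne_empty.mpr (psupp_ne_empty x)
      have hiu : i ∈ psupp u.1 ∪ psupp v.1 := h2 ▸ Finset.mem_univ i
      rcases Finset.mem_union.mp hiu with h' | h'
      · have : i ∈ psupp u.1 ∩ psupp x.1 := Finset.mem_inter.mpr ⟨h', hi⟩
        rw [e1] at this
        exact absurd this (Finset.notMem_empty i)
      · have : i ∈ psupp x.1 ∩ psupp v.1 := Finset.mem_inter.mpr ⟨hi, h'⟩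
        rw [e2] at this
        exact absurd this (Finset.notMem_empty i)
    omega
  · -- distance 2
    have hCne : (psupp u.1 ∪ psupp v.1)ᶜ ≠ ∅ :=
      fun h => h2 ((Finset.compl_eq_empty_iff _).mp h)
    have hCuniv : (psupp u.1 ∪ psupp v.1)ᶜ ≠ Finset.univ := by
      intro h
      have := (Finset.compl_eq_univ_iff _).mp h
      exact hAne (Finset.union_eq_empty.mp this).1
    set w : ZdvR (∀ i, F i) := vchi F (psupp u.1 ∪ psupp v.1)ᶜ hCne hCuniv with hw
    have hws : psupp w.1 = (psupp u.1 ∪ psupp v.1)ᶜ := psupp_chi _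
    have hiu : psupp u.1 ∩ (psupp u.1 ∪ psupp v.1)ᶜ = ∅ := by
      rw [Finset.eq_empty_iff_forall_notMem]
      intro i hi
      rw [Finset.mem_inter, Finset.mem_compl] at hi
      exact hi.2 (Finset.mem_union_left _ hi.1)
    have hiv : (psupp u.1 ∪ psupp v.1)ᶜ ∩ psupp v.1 = ∅ := by
      rw [Finset.eq_empty_iff_forall_notMem]
      intro i hi
      rw [Finset.mem_inter, Finset.mem_compl] at hi
      exact hi.1 (Finset.mem_union_right _ hi.2)
    have ha1 : (zdgR (∀ i, F i)).Adj u w := by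
      rw [adj_iff, hws]
      exact ⟨vertex_ne_of_psupp_ne (by rw [hws]; exact ne_of_inter_eq_empty hAne hiu), hiu⟩
    have ha2 : (zdgR (∀ i, F i)).Adj w v := by
      rw [adj_iff, hws]
      exact ⟨vertex_ne_of_psupp_ne (by rw [hws]; exact ne_of_inter_eq_empty hCne hiv), hiv⟩
    set p : (zdgR (∀ i, F i)).Walk u v :=
      SimpleGraph.Walk.cons ha1 (SimpleGraph.Walk.cons ha2 SimpleGraph.Walk.nil) with hp
    have hle : (zdgR (∀ i, F i)).dist u v ≤ 2 := by
      have := SimpleGraph.dist_le p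
      simpa [hp] using this
    have hreach : (zdgR (∀ i, F i)).Reachable u v := p.reachable
    have hne0 : (zdgR (∀ i, F i)).dist u v ≠ 0 :=
      fun h => huv (hreach.dist_eq_zero_iff.mp h)
    have hne1 : (zdgR (∀ i, F i)).dist u v ≠ 1 := by
      intro h
      exact h1 ((adj_iff u v).mp (SimpleGraph.dist_eq_one_iff_adj.mp h)).2
    omega

/-- The purely combinatorial heart of the upper bound. -/
lemma combo {k : ℕ} (i0 j' : Fin k) (hj' : j' ≠ i0) (A B : Finset (Fin k))
    (hA1 : A ≠ ∅) (hA2 : A ≠ Finset.univ) (hB1 : B ≠ ∅) (hB2 : B ≠ Finset.univ)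
    (hAB : A ≠ B)
    (H : ∀ C : Finset (Fin k), i0 ∈ C → C ≠ Finset.univ →
      (if A ∩ C = ∅ then (1 : ℕ) else if A ∪ C = Finset.univ then 3 else 2) =
      (if B ∩ C = ∅ then (1 : ℕ) else if B ∪ C = Finset.univ then 3 else 2)) : False := by
  classical
  have hsingle_ne : ({i0} : Finset (Fin k)) ≠ Finset.univ := by
    intro h
    exact hj' (Finset.mem_singleton.mp (h ▸ Finset.mem_univ j'))
  have hiff : i0 ∈ A ↔ i0 ∈ B := by
    have h := H {i0} (Finset.mem_singleton_self i0) hsingle_ne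
    constructor
    · intro hmem
      by_contra hnot
      have h1 : A ∩ ({i0} : Finset (Fin k)) ≠ ∅ :=
        Finset.ne_empty_of_mem (Finset.mem_inter.mpr ⟨hmem, Finset.mem_singleton_self i0⟩)
      have h2 : A ∪ ({i0} : Finset (Fin k)) ≠ Finset.univ := by
        rw [Finset.union_eq_left.mpr (Finset.singleton_subset_iff.mpr hmem)]
        exact hA2
      have h3 : B ∩ ({i0} : Finset (Fin k)) = ∅ := Finset.inter_singleton_of_notMem hnot
      rw [if_neg h1, if_neg h2, if_pos h3] at h
      norm_num at h
    · intro hmem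
      by_contra hnot
      have h1 : B ∩ ({i0} : Finset (Fin k)) ≠ ∅ :=
        Finset.ne_empty_of_mem (Finset.mem_inter.mpr ⟨hmem, Finset.mem_singleton_self i0⟩)
      have h2 : B ∪ ({i0} : Finset (Fin k)) ≠ Finset.univ := by
        rw [Finset.union_eq_left.mpr (Finset.singleton_subset_iff.mpr hmem)]
        exact hB2
      have h3 : A ∩ ({i0} : Finset (Fin k)) = ∅ := Finset.inter_singleton_of_notMem hnot
      rw [if_pos h3, if_neg h1, if_neg h2] at h
      norm_num at h
  obtain ⟨j, hj⟩ : ∃ j, (j ∈ A ∧ j ∉ B) ∨ (j ∈ B ∧ j ∉ A) := by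
    by_contra hc
    push_neg at hc
    apply hAB
    ext j
    have := hc j
    tauto
  by_cases hi0A : i0 ∈ A
  · have hi0B : i0 ∈ B := hiff.mp hi0A
    rcases hj with ⟨hjA, hjB⟩ | ⟨hjB, hjA⟩
    · -- j ∈ A \ B; use C = Aᶜ ∪ {i0}
      have hji0 : j ≠ i0 := fun e => hjB (e ▸ hi0B)
      set C := Aᶜ ∪ ({i0} : Finset (Fin k)) with hC
      have hjC : j ∉ C := by
        simp only [hC, Finset.mem_union, Finset.mem_compl, Finset.mem_singleton]
        push_neg
        exact ⟨hjA, hji0⟩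
      have hCuniv : C ≠ Finset.univ := fun h => hjC (h ▸ Finset.mem_univ j)
      have hi0C : i0 ∈ C := Finset.mem_union_right _ (Finset.mem_singleton_self i0)
      have h := H C hi0C hCuniv
      have hACu : A ∪ C = Finset.univ := by
        rw [Finset.eq_univ_iff_forall]
        intro x
        by_cases hx : x ∈ A
        · exact Finset.mem_union_left _ hx
        · exact Finset.mem_union_right _ (Finset.mem_union_left _ (Finset.mem_compl.mpr hx))
      have hBCu : B ∪ C ≠ Finset.univ := by
        intro e
        rcases Finset.mem_union.mp (e ▸ Finset.mem_univ j) with h' | h'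
        · exact hjB h'
        · exact hjC h'
      rw [if_neg (Finset.ne_empty_of_mem (Finset.mem_inter.mpr ⟨hi0A, hi0C⟩)),
          if_pos hACu,
          if_neg (Finset.ne_empty_of_mem (Finset.mem_inter.mpr ⟨hi0B, hi0C⟩)),
          if_neg hBCu] at h
      norm_num at h
    · -- j ∈ B \ A; use C = Bᶜ ∪ {i0}
      have hji0 : j ≠ i0 := fun e => hjA (e ▸ hi0A)
      set C := Bᶜ ∪ ({i0} : Finset (Fin k)) with hC
      have hjC : j ∉ C := by
        simp only [hC, Finset.mem_union, Finset.mem_compl, Finset.mem_singleton]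
        push_neg
        exact ⟨hjB, hji0⟩
      have hCuniv : C ≠ Finset.univ := fun h => hjC (h ▸ Finset.mem_univ j)
      have hi0C : i0 ∈ C := Finset.mem_union_right _ (Finset.mem_singleton_self i0)
      have h := H C hi0C hCuniv
      have hBCu : B ∪ C = Finset.univ := by
        rw [Finset.eq_univ_iff_forall]
        intro x
        by_cases hx : x ∈ B
        · exact Finset.mem_union_left _ hx
        · exact Finset.mem_union_right _ (Finset.mem_union_left _ (Finset.mem_compl.mpr hx))
      have hACu : A ∪ C ≠ Finset.univ := by
        intro e
        rcases Finset.mem_union.mp (e ▸ Finset.mem_univ j) with h' | h'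
        · exact hjA h'
        · exact hjC h'
      rw [if_neg (Finset.ne_empty_of_mem (Finset.mem_inter.mpr ⟨hi0A, hi0C⟩)),
          if_neg hACu,
          if_neg (Finset.ne_empty_of_mem (Finset.mem_inter.mpr ⟨hi0B, hi0C⟩)),
          if_pos hBCu] at h
      norm_num at h
  · have hi0B : i0 ∉ B := fun h => hi0A (hiff.mpr h)
    rcases hj with ⟨hjA, hjB⟩ | ⟨hjB, hjA⟩
    · -- j ∈ A \ B; use C = Bᶜ
      have hi0C : i0 ∈ Bᶜ := Finset.mem_compl.mpr hi0B
      have hCuniv : Bᶜ ≠ Finset.univ := fun h => hB1 ((Finset.compl_eq_univ_iff _).mp h)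
      have h := H Bᶜ hi0C hCuniv
      rw [if_neg (Finset.ne_empty_of_mem (Finset.mem_inter.mpr
            ⟨hjA, Finset.mem_compl.mpr hjB⟩)),
          if_pos (Finset.inter_compl B)] at h
      split_ifs at h <;> norm_num at h
    · -- j ∈ B \ A; use C = Aᶜ
      have hi0C : i0 ∈ Aᶜ := Finset.mem_compl.mpr hi0A
      have hCuniv : Aᶜ ≠ Finset.univ := fun h => hA1 ((Finset.compl_eq_univ_iff _).mp h)
      have h := H Aᶜ hi0C hCuniv
      rw [if_pos (Finset.inter_compl A),
          if_neg (Finset.ne_empty_of_mem (Finset.mem_inter.mpr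
            ⟨hjB, Finset.mem_compl.mpr hjA⟩))] at h
      split_ifs at h <;> norm_num at h

end Aux

theorem mdim_semisimple {k : ℕ} (hk : 2 ≤ k) (F : Fin k → Type*)
    [∀ i, Field (F i)] [∀ i, Fintype (F i)]
    (hF : ∃ i, 2 < Fintype.card (F i)) :
    mdim (zdgR (∀ i, F i)) = (zdvSet (∀ i, F i)).ncard + 2 - 2 ^ k := by
  classical
  haveI : Nonempty (Fin k) := ⟨⟨0, by omega⟩⟩
  obtain ⟨i0, hi0⟩ := hF
  obtain ⟨a, ha0, ha1⟩ : ∃ a : F i0, a ≠ 0 ∧ a ≠ 1 := by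
    by_contra hc
    push_neg at hc
    have hsub : (Finset.univ : Finset (F i0)) ⊆ {0, 1} := by
      intro a _
      rcases eq_or_ne a 0 with h | h
      · simp [h]
      · simp [hc a h]
    have hcard := Finset.card_le_card hsub
    rw [Finset.card_univ] at hcard
    have h2 : ({0, 1} : Finset (F i0)).card ≤ 2 := by
      have := Finset.card_insert_le (0 : F i0) ({1} : Finset (F i0))
      simpa using this
    omega
  obtain ⟨j', hj'⟩ := Fintype.exists_ne_of_one_lt_card (by simp; omega) i0
  have h2k : (2 : ℕ) ≤ 2 ^ k := by
    calc (2 : ℕ) = 2 ^ 1 := by norm_num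
    _ ≤ 2 ^ k := Nat.pow_le_pow_right (by norm_num) (by omega)
  -- the number of possible supports
  have hcardT : Nat.card {A : Finset (Fin k) // A ≠ ∅ ∧ A ≠ Finset.univ} = 2 ^ k - 2 := by
    rw [Nat.card_eq_fintype_card]
    have e : {A : Finset (Fin k) // A ≠ ∅ ∧ A ≠ Finset.univ} ≃
        {A : Finset (Fin k) // ¬(A = ∅ ∨ A = Finset.univ)} :=
      Equiv.subtypeEquivRight (fun A => by push_neg; rfl)
    rw [Fintype.card_congr e, Fintype.card_subtype_compl, Fintype.card_finset, Fintype.card_fin]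
    congr 1
    rw [Fintype.card_subtype]
    have hfu : Finset.univ.filter (fun A : Finset (Fin k) => A = ∅ ∨ A = Finset.univ) =
        {∅, Finset.univ} := by
      ext A
      simp
    rw [hfu, Finset.card_insert_of_notMem (by
      simp only [Finset.mem_singleton]
      exact fun h => Finset.univ_nonempty.ne_empty h.symm)]
    simp
  set T := {A : Finset (Fin k) // A ≠ ∅ ∧ A ≠ Finset.univ} with hT
  set vchiT : T → ZdvR (∀ i, F i) := fun A => vchi F A.1 A.2.1 A.2.2 with hvchiT
  have hinj : Function.Injective vchiT := by
    intro A B h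
    have h' : psupp (vchiT A).1 = psupp (vchiT B).1 := by rw [h]
    apply Subtype.ext
    simpa [hvchiT, vchi, psupp_chi] using h'
  set E : Set (ZdvR (∀ i, F i)) := Set.range vchiT with hE
  have hEcard : E.ncard = 2 ^ k - 2 := by
    rw [hE, ← Nat.card_coe_set_eq, Nat.card_range_of_injective hinj, hcardT]
  have hNcard : Nat.card (ZdvR (∀ i, F i)) = (zdvSet (∀ i, F i)).ncard :=
    Nat.card_coe_set_eq _
  have hEle : 2 ^ k - 2 ≤ Nat.card (ZdvR (∀ i, F i)) := by
    rw [← hEcard, ← Set.ncard_univ]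
    exact Set.ncard_le_ncard (Set.subset_univ E) (Set.toFinite _)
  -- the candidate resolving set
  set W : Set (ZdvR (∀ i, F i)) := Eᶜ with hW
  have hWcard : W.ncard = Nat.card (ZdvR (∀ i, F i)) - (2 ^ k - 2) := by
    have h' := Set.ncard_add_ncard_compl E (Set.toFinite _) (Set.toFinite _)
    rw [hEcard] at h'
    rw [hW]
    omega
  -- upper bound: W is resolving
  have hres : IsResolving (zdgR (∀ i, F i)) W := by
    intro u v hd
    by_contra hne
    -- u ∈ E and v ∈ E
    have huE : u ∈ E := by
      by_contra hu
      have h0 := hd u hu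
      rw [SimpleGraph.dist_self] at h0
      have hf := dist_formula v u (fun e => hne e.symm)
      rw [← h0] at hf
      split_ifs at hf <;> omega
    have hvE : v ∈ E := by
      by_contra hv
      have h0 := hd v hv
      rw [SimpleGraph.dist_self] at h0
      have hf := dist_formula u v hne
      rw [h0] at hf
      split_ifs at hf <;> omega
    obtain ⟨A, hA⟩ := huE
    obtain ⟨B, hB⟩ := hvE
    have hsuA : psupp u.1 = A.1 := by rw [← hA]; exact psupp_chi _
    have hsuB : psupp v.1 = B.1 := by rw [← hB]; exact psupp_chi _
    have hABne : A.1 ≠ B.1 := by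
      intro e
      apply hne
      rw [← hA, ← hB]
      congr 1
      exact Subtype.ext e
    apply combo i0 j' hj' A.1 B.1 A.2.1 A.2.2 B.2.1 B.2.2 hABne
    intro C hi0C hCuniv
    -- build the witness vertex with support C and value a at i0
    set x : ∀ i, F i := Function.update (chi F C) i0 a with hx
    have hxsupp : psupp x = C := by
      ext i
      rw [mem_psupp]
      rcases eq_or_ne i i0 with rfl | hii
      · simp [hx, Function.update_self, ha0, hi0C]
      · simp only [hx, Function.update_of_ne hii]
        by_cases h : i ∈ C <;> simp [chi, h]
    have hxmem : x ∈ zdvSet (∀ i, F i) := by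
      rw [mem_zdvSet_iff]
      constructor
      · intro h
        have := congrFun h i0
        rw [hx, Function.update_self, Pi.zero_apply] at this
        exact ha0 this
      · obtain ⟨i, hi⟩ : ∃ i, i ∉ C := by
          by_contra hcc
          push_neg at hcc
          exact hCuniv (Finset.eq_univ_iff_forall.mpr hcc)
        refine ⟨i, ?_⟩
        have hii : i ≠ i0 := fun e => hi (e ▸ hi0C)
        rw [hx, Function.update_of_ne hii]
        simp [chi, hi]
    set w : ZdvR (∀ i, F i) := ⟨x, hxmem⟩ with hwdef
    have hwW : w ∈ W := by
      intro hwE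
      obtain ⟨D, hD⟩ := hwE
      have := congrFun (congrArg Subtype.val hD) i0
      simp only [hvchiT, vchi, hwdef] at this
      rw [hx, Function.update_self] at this
      by_cases h : i0 ∈ D.1 <;> simp [chi, h] at this
      · exact ha1 this.symm
      · exact ha0 this.symm
    have hwu : u ≠ w := by
      intro e
      have := congrFun (congrArg Subtype.val e) i0
      rw [← hA] at this
      simp only [hvchiT, vchi, hwdef] at this
      rw [hx, Function.update_self] at this
      by_cases h : i0 ∈ A.1 <;> simp [chi, h] at this
      · exact ha1 this.symm
      · exact ha0 this.symm
    have hwv : v ≠ w := by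
      intro e
      have := congrFun (congrArg Subtype.val e) i0
      rw [← hB] at this
      simp only [hvchiT, vchi, hwdef] at this
      rw [hx, Function.update_self] at this
      by_cases h : i0 ∈ B.1 <;> simp [chi, h] at this
      · exact ha1 this.symm
      · exact ha0 this.symm
    have := hd w hwW
    rw [dist_formula u w hwu, dist_formula v w hwv, hsuA, hsuB] at this
    have hws : psupp w.1 = C := hxsupp
    rw [hws] at this
    exact this
  -- lower bound: every resolving set has at least this many elements
  have hlow : ∀ m ∈ {m | ∃ S : Set (ZdvR (∀ i, F i)), S.Finite ∧ S.ncard = m ∧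
      IsResolving (zdgR (∀ i, F i)) S},
      Nat.card (ZdvR (∀ i, F i)) - (2 ^ k - 2) ≤ m := by
    rintro m ⟨S, hSfin, rfl, hSres⟩
    have hinjOn : Set.InjOn (fun u : ZdvR (∀ i, F i) => psupp u.1) Sᶜ := by
      intro u hu v hv he
      apply hSres
      intro w hw
      have hwu : u ≠ w := fun e => hu (e ▸ hw)
      have hwv : v ≠ w := fun e => hv (e ▸ hw)
      have he' : psupp u.1 = psupp v.1 := he
      rw [dist_formula u w hwu, dist_formula v w hwv, he']
    have himg : (fun u : ZdvR (∀ i, F i) => psupp u.1) '' Sᶜ ⊆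
        {A : Finset (Fin k) | A ≠ ∅ ∧ A ≠ Finset.univ} := by
      rintro _ ⟨u, -, rfl⟩
      exact ⟨psupp_ne_empty u, psupp_ne_univ u⟩
    have hle : (Sᶜ).ncard ≤ 2 ^ k - 2 := by
      calc (Sᶜ).ncard = ((fun u : ZdvR (∀ i, F i) => psupp u.1) '' Sᶜ).ncard :=
            (Set.ncard_image_of_injOn hinjOn).symm
        _ ≤ ({A : Finset (Fin k) | A ≠ ∅ ∧ A ≠ Finset.univ}).ncard :=
            Set.ncard_le_ncard himg (Set.toFinite _)
        _ = 2 ^ k - 2 := by rw [← Nat.card_coe_set_eq]; exact hcardT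
    have := Set.ncard_add_ncard_compl S (Set.toFinite _) (Set.toFinite _)
    omega
  have hupmem : Nat.card (ZdvR (∀ i, F i)) - (2 ^ k - 2) ∈
      {m | ∃ S : Set (ZdvR (∀ i, F i)), S.Finite ∧ S.ncard = m ∧
        IsResolving (zdgR (∀ i, F i)) S} :=
    ⟨W, Set.toFinite _, hWcard, hres⟩
  have : mdim (zdgR (∀ i, F i)) = Nat.card (ZdvR (∀ i, F i)) - (2 ^ k - 2) := by
    rw [mdim]
    exact le_antisymm (Nat.sInf_le hupmem) (le_csInf ⟨_, hupmem⟩ hlow)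
  rw [this, hNcard] at *
  omega
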